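/- For all z, z' ∈ ℝ^d with |z| ≤ C, the Gibbs densities satisfy d_TV(π_{z'}, π_z) ≤ ((B/γ) · exp(3(BC + R)/γ) + 1/C) · |z' − z|. -/

import Mathlib

/-!
Moving the parameter from `z` to `z'` changes every Gibbs weight `exp ((f a · z + r a) / γ)` by a
factor in `[e^{-ε}, e^{ε}]` with `ε = B ‖z' - z‖ / γ`, hence also the normalising constant, so the
two Gibbs densities are within a factor `e^{2ε}` of each other. Two probability densities with
`q ≤ K p` and `p ≤ K q` give every set masses differing by at most `1 - K⁻¹`, and
`1 - e^{-2ε} ≤ 2ε`. Finally `2 B / γ ≤ (B / γ) e^{3 (B C + R) / γ} + 1 / C` by `e^x ≥ 1 + x` and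
`3 s² - s + 1 > 0`.
-/

open MeasureTheory
open scoped RealInnerProductSpace

/-- The Gibbs probability density `π_z(a) ∝ exp((f(a)·z + r(a))/γ)` on the set `𝒜`. -/
noncomputable def gibbs {m d : ℕ} (𝒜 : Set (EuclideanSpace ℝ (Fin m))) (γ : ℝ)
    (f : EuclideanSpace ℝ (Fin m) → EuclideanSpace ℝ (Fin d))
    (r : EuclideanSpace ℝ (Fin m) → ℝ)
    (z : EuclideanSpace ℝ (Fin d)) (a : EuclideanSpace ℝ (Fin m)) : ℝ :=
  Real.exp ((⟪f a, z⟫ + r a) / γ) /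
    ∫ a' in 𝒜, Real.exp ((⟪f a', z⟫ + r a') / γ)

/-- Total variation distance between two densities on `𝒜`:
`d_TV(p,q) = sup_{A ⊆ 𝒜 measurable} |∫_A p − ∫_A q|`. -/
noncomputable def dTV {m : ℕ} (𝒜 : Set (EuclideanSpace ℝ (Fin m)))
    (p q : EuclideanSpace ℝ (Fin m) → ℝ) : ℝ :=
  ⨆ A : {A : Set (EuclideanSpace ℝ (Fin m)) // MeasurableSet A ∧ A ⊆ 𝒜},
    |(∫ a in A.1, p a) - ∫ a in A.1, q a|

section Density

variable {α : Type*} [MeasurableSpace α] {μ : Measure α}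

lemma setIntegral_div_setIntegral_le_one {g : α → ℝ} {s A : Set α} (hs : MeasurableSet s)
    (hg : IntegrableOn g s μ) (hg0 : ∀ a ∈ s, 0 ≤ g a) (hA : A ⊆ s) :
    ∫ a in A, g a / ∫ a' in s, g a' ∂μ ∂μ ≤ 1 := by
  rw [integral_div]
  refine div_le_one_of_le₀ (setIntegral_mono_set hg ?_ hA.eventuallyLE)
    (setIntegral_nonneg hs hg0)
  filter_upwards [ae_restrict_mem hs] with a ha using hg0 a ha

lemma div_setIntegral_le_sq_mul {g₁ g₂ : α → ℝ} {s : Set α} {c : ℝ} (hs : MeasurableSet s)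
    (hg₁ : IntegrableOn g₁ s μ) (hg₂ : IntegrableOn g₂ s μ) (hg₁0 : ∀ a ∈ s, 0 ≤ g₁ a)
    (hZ₁ : 0 < ∫ a in s, g₁ a ∂μ) (hZ₂ : 0 < ∫ a in s, g₂ a ∂μ)
    (h₁₂ : ∀ a ∈ s, g₁ a ≤ c * g₂ a) (h₂₁ : ∀ a ∈ s, g₂ a ≤ c * g₁ a) {a : α} (ha : a ∈ s) :
    g₁ a / ∫ a' in s, g₁ a' ∂μ ≤ c ^ 2 * (g₂ a / ∫ a' in s, g₂ a' ∂μ) := by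
  have hZ : ∫ a' in s, g₂ a' ∂μ ≤ c * ∫ a' in s, g₁ a' ∂μ := by
    rw [← integral_const_mul]
    exact setIntegral_mono_on hg₂ (hg₁.const_mul c) hs h₂₁
  rw [← mul_div_assoc, div_le_div_iff₀ hZ₁ hZ₂]
  calc g₁ a * ∫ a' in s, g₂ a' ∂μ ≤ (c * g₂ a) * (c * ∫ a' in s, g₁ a' ∂μ) :=
        mul_le_mul (h₁₂ a ha) hZ hZ₂.le ((hg₁0 a ha).trans (h₁₂ a ha))
    _ = c ^ 2 * g₂ a * ∫ a' in s, g₁ a' ∂μ := by ring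

lemma setIntegral_sub_le_one_sub_inv {p q : α → ℝ} {A : Set α} {K : ℝ} (hA : MeasurableSet A)
    (hp : IntegrableOn p A μ) (hq : IntegrableOn q A μ)
    (hp1 : ∫ a in A, p a ∂μ ≤ 1) (hK : 1 ≤ K) (hpq : ∀ a ∈ A, p a ≤ K * q a) :
    ∫ a in A, p a ∂μ - ∫ a in A, q a ∂μ ≤ 1 - K⁻¹ := by
  have hqp : K⁻¹ * ∫ a in A, p a ∂μ ≤ ∫ a in A, q a ∂μ := by
    rw [← integral_const_mul]
    refine setIntegral_mono_on (hp.const_mul _) hq hA fun a ha => ?_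
    rw [inv_mul_le_iff₀ (by linarith)]
    exact hpq a ha
  have hK' : K⁻¹ ≤ 1 := inv_le_one_of_one_le₀ hK
  nlinarith

lemma abs_setIntegral_sub_le_one_sub_inv {p q : α → ℝ} {A : Set α} {K : ℝ}
    (hA : MeasurableSet A) (hp : IntegrableOn p A μ) (hq : IntegrableOn q A μ)
    (hp1 : ∫ a in A, p a ∂μ ≤ 1) (hq1 : ∫ a in A, q a ∂μ ≤ 1) (hK : 1 ≤ K)
    (hpq : ∀ a ∈ A, p a ≤ K * q a) (hqp : ∀ a ∈ A, q a ≤ K * p a) :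
    |∫ a in A, p a ∂μ - ∫ a in A, q a ∂μ| ≤ 1 - K⁻¹ :=
  abs_sub_le_iff.2 ⟨setIntegral_sub_le_one_sub_inv hA hp hq hp1 hK hpq,
    setIntegral_sub_le_one_sub_inv hA hq hp hq1 hK hqp⟩

end Density

section Gibbs

noncomputable def gibbsWeight {m d : ℕ} (γ : ℝ)
    (f : EuclideanSpace ℝ (Fin m) → EuclideanSpace ℝ (Fin d))
    (r : EuclideanSpace ℝ (Fin m) → ℝ) (z : EuclideanSpace ℝ (Fin d))
    (a : EuclideanSpace ℝ (Fin m)) : ℝ :=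
  Real.exp ((⟪f a, z⟫ + r a) / γ)

variable {m d : ℕ} {𝒜 : Set (EuclideanSpace ℝ (Fin m))} {γ B R : ℝ}
  {f : EuclideanSpace ℝ (Fin m) → EuclideanSpace ℝ (Fin d)} {r : EuclideanSpace ℝ (Fin m) → ℝ}

lemma gibbsWeight_pos (z : EuclideanSpace ℝ (Fin d)) (a : EuclideanSpace ℝ (Fin m)) :
    0 < gibbsWeight γ f r z a :=
  Real.exp_pos _

lemma gibbsWeight_le_exp_mul {a : EuclideanSpace ℝ (Fin m)} (hγ : 0 < γ) (hfa : ‖f a‖ ≤ B)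
    (z z' : EuclideanSpace ℝ (Fin d)) :
    gibbsWeight γ f r z a ≤ Real.exp (B * ‖z - z'‖ / γ) * gibbsWeight γ f r z' a := by
  unfold gibbsWeight
  rw [← Real.exp_add, ← add_div]
  refine Real.exp_le_exp.2 (div_le_div_of_nonneg_right ?_ hγ.le)
  have h := real_inner_le_norm (f a) (z - z')
  rw [inner_sub_right] at h
  linarith [mul_le_mul_of_nonneg_right hfa (norm_nonneg (z - z'))]

lemma integrableOn_gibbsWeight (hγ : 0 < γ) (h𝒜 : MeasurableSet 𝒜) (h𝒜fin : volume 𝒜 ≠ ⊤)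
    (hf : Measurable f) (hr : Measurable r) (hfB : ∀ a ∈ 𝒜, ‖f a‖ ≤ B)
    (hrR : ∀ a ∈ 𝒜, |r a| ≤ R) (z : EuclideanSpace ℝ (Fin d)) :
    IntegrableOn (gibbsWeight γ f r z) 𝒜 := by
  have hmeas : Measurable (gibbsWeight γ f r z) :=
    Real.measurable_exp.comp (((hf.inner measurable_const).add hr).div_const γ)
  refine Measure.integrableOn_of_bounded (M := Real.exp ((B * ‖z‖ + R) / γ)) h𝒜fin
    hmeas.aestronglyMeasurable ?_
  filter_upwards [ae_restrict_mem h𝒜] with a ha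
  rw [Real.norm_of_nonneg (gibbsWeight_pos z a).le, gibbsWeight]
  refine Real.exp_le_exp.2 (div_le_div_of_nonneg_right (add_le_add ?_ ?_) hγ.le)
  · exact (real_inner_le_norm _ _).trans (mul_le_mul_of_nonneg_right (hfB a ha) (norm_nonneg z))
  · exact (le_abs_self _).trans (hrR a ha)

lemma dTV_gibbs_le (hγ : 0 < γ) (h𝒜 : MeasurableSet 𝒜) (h𝒜fin : volume 𝒜 ≠ ⊤)
    (h𝒜0 : volume 𝒜 ≠ 0) (hf : Measurable f) (hr : Measurable r) (hB : 0 ≤ B)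
    (hfB : ∀ a ∈ 𝒜, ‖f a‖ ≤ B) (hrR : ∀ a ∈ 𝒜, |r a| ≤ R) (z z' : EuclideanSpace ℝ (Fin d)) :
    dTV 𝒜 (gibbs 𝒜 γ f r z') (gibbs 𝒜 γ f r z) ≤ 1 - (Real.exp (B * ‖z' - z‖ / γ) ^ 2)⁻¹ := by
  have hint := integrableOn_gibbsWeight hγ h𝒜 h𝒜fin hf hr hfB hrR
  have hZ w : 0 < ∫ a in 𝒜, gibbsWeight γ f r w a := by
    have : NeZero (volume 𝒜) := ⟨h𝒜0⟩
    exact integral_exp_pos (hint w)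
  have hratio w w' : ∀ a ∈ 𝒜,
      gibbs 𝒜 γ f r w a ≤ Real.exp (B * ‖w - w'‖ / γ) ^ 2 * gibbs 𝒜 γ f r w' a := fun a ha =>
    div_setIntegral_le_sq_mul h𝒜 (hint w) (hint w')
      (fun b _ => (gibbsWeight_pos w b).le) (hZ w) (hZ w')
      (fun b hb => gibbsWeight_le_exp_mul hγ (hfB b hb) w w')
      (fun b hb => norm_sub_rev w w' ▸ gibbsWeight_le_exp_mul hγ (hfB b hb) w' w) ha
  have hK : 1 ≤ Real.exp (B * ‖z' - z‖ / γ) ^ 2 :=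
    one_le_pow₀ (Real.one_le_exp (by positivity))
  refine Real.iSup_le (fun ⟨A, hAm, hA𝒜⟩ => ?_) (sub_nonneg.2 (inv_le_one_of_one_le₀ hK))
  have hintA w : IntegrableOn (gibbs 𝒜 γ f r w) A :=
    IntegrableOn.mono_set ((hint w).div_const _) hA𝒜
  have hmass w : ∫ a in A, gibbs 𝒜 γ f r w a ≤ 1 :=
    setIntegral_div_setIntegral_le_one h𝒜 (hint w) (fun a _ => (gibbsWeight_pos w a).le) hA𝒜
  exact abs_setIntegral_sub_le_one_sub_inv hAm (hintA z') (hintA z)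
    (hmass z') (hmass z) hK (fun a ha => hratio z' z a (hA𝒜 ha))
    (fun a ha => norm_sub_rev z z' ▸ hratio z z' a (hA𝒜 ha))

end Gibbs

lemma one_sub_inv_exp_sq_le (x : ℝ) : 1 - (Real.exp x ^ 2)⁻¹ ≤ 2 * x := by
  rw [← Real.exp_nat_mul, ← Real.exp_neg]
  push_cast
  linarith [Real.add_one_le_exp (-(2 * x))]

lemma two_mul_div_le_mul_exp_add_inv {γ C B R : ℝ} (hγ : 0 < γ) (hC : 0 < C) (hB : 0 ≤ B)
    (hR : 0 ≤ R) : 2 * (B / γ) ≤ B / γ * Real.exp (3 * (B * C + R) / γ) + 1 / C := by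
  set t := B / γ with ht
  have ht0 : 0 ≤ t := div_nonneg hB hγ.le
  have hexp : 1 + 3 * t * C ≤ Real.exp (3 * (B * C + R) / γ) := by
    have h : 3 * t * C ≤ 3 * (B * C + R) / γ :=
      calc 3 * t * C = 3 * (B * C) / γ := by ring
        _ ≤ 3 * (B * C + R) / γ := by gcongr; linarith
    linarith [Real.add_one_le_exp (3 * (B * C + R) / γ)]
  have hquad : t ≤ 3 * t ^ 2 * C + 1 / C := by
    rw [← sub_nonneg]
    have : 3 * t ^ 2 * C + 1 / C - t = (3 * (t * C) ^ 2 - t * C + 1) / C := by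
      field_simp
      ring
    rw [this]
    exact div_nonneg (by nlinarith [sq_nonneg (t * C - 1 / 6)]) hC.le
  nlinarith [mul_le_mul_of_nonneg_left hexp ht0]

theorem stmt1_general {m d : ℕ}
    (𝒜 : Set (EuclideanSpace ℝ (Fin m)))
    (h𝒜 : IsCompact 𝒜) (h𝒜0 : 0 < volume 𝒜)
    (γ C B R : ℝ) (hγ : 0 < γ) (hC : 0 < C) (hB : 0 < B) (hR : 0 < R)
    (f : EuclideanSpace ℝ (Fin m) → EuclideanSpace ℝ (Fin d))
    (r : EuclideanSpace ℝ (Fin m) → ℝ)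
    (hf : Measurable f) (hr : Measurable r)
    (hfB : ∀ a ∈ 𝒜, ‖f a‖ ≤ B) (hrR : ∀ a ∈ 𝒜, |r a| ≤ R)
    (z z' : EuclideanSpace ℝ (Fin d)) :
    dTV 𝒜 (gibbs 𝒜 γ f r z') (gibbs 𝒜 γ f r z) ≤
      (B / γ * Real.exp (3 * (B * C + R) / γ) + 1 / C) * ‖z' - z‖ :=
  calc dTV 𝒜 (gibbs 𝒜 γ f r z') (gibbs 𝒜 γ f r z)
      ≤ 1 - (Real.exp (B * ‖z' - z‖ / γ) ^ 2)⁻¹ :=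
        dTV_gibbs_le hγ h𝒜.measurableSet h𝒜.measure_lt_top.ne h𝒜0.ne' hf hr hB.le hfB hrR z z'
    _ ≤ 2 * (B * ‖z' - z‖ / γ) := one_sub_inv_exp_sq_le _
    _ = 2 * (B / γ) * ‖z' - z‖ := by ring
    _ ≤ (B / γ * Real.exp (3 * (B * C + R) / γ) + 1 / C) * ‖z' - z‖ :=
        mul_le_mul_of_nonneg_right (two_mul_div_le_mul_exp_add_inv hγ hC hB.le hR.le)
          (norm_nonneg _)

theorem stmt1 {m d : ℕ}
    (𝒜 : Set (EuclideanSpace ℝ (Fin m)))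
    (h𝒜 : IsCompact 𝒜) (h𝒜0 : 0 < volume 𝒜) (h𝒜fin : volume 𝒜 < ⊤)
    (γ C B R : ℝ) (hγ : 0 < γ) (hC : 0 < C) (hB : 0 < B) (hR : 0 < R)
    (f : EuclideanSpace ℝ (Fin m) → EuclideanSpace ℝ (Fin d))
    (r : EuclideanSpace ℝ (Fin m) → ℝ)
    (hf : Measurable f) (hr : Measurable r)
    (hfB : ∀ a ∈ 𝒜, ‖f a‖ ≤ B) (hrR : ∀ a ∈ 𝒜, |r a| ≤ R)
    (z z' : EuclideanSpace ℝ (Fin d)) (hz : ‖z‖ ≤ C) :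
    dTV 𝒜 (gibbs 𝒜 γ f r z') (gibbs 𝒜 γ f r z) ≤
      (B / γ * Real.exp (3 * (B * C + R) / γ) + 1 / C) * ‖z' - z‖ :=
  stmt1_general 𝒜 h𝒜 h𝒜0 γ C B R hγ hC hB hR f r hf hr hfB hrR z z'
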